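/- Let V be a real inner product space, W ⊆ V a finite-dimensional subspace, p, q positive integers, and J : V → V a symmetric linear map with J² = pJ + qI. Then W is a semi-slant subspace (i.e. W = D₁ ⊕ D₂ for some mutually orthogonal subspaces D₁, D₂ with J(D₁) = D₁ and D₂ slant with slant angle θ ≠ 0) if and only if there exists a constant λ ∈ [0, 1) such that NX = 0 for every X ∈ W orthogonal to the subspace D := {X ∈ W : T²X = λ(pTX + qX)}; moreover, in that case D = D₂ and λ = cos²θ. -/

import Mathlib

open scoped RealInnerProductSpace

/-- The tangential part of `J X` with respect to the subspace `W`: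
`T X := P_W (J X)` (also used for `t U := P_W (J U)` when `U ∈ Wᗮ`). -/
noncomputable def tang {V : Type*} [NormedAddCommGroup V] [InnerProductSpace ℝ V]
    (W : Submodule ℝ V) [W.HasOrthogonalProjection] (J : V →ₗ[ℝ] V) (X : V) : V :=
  (Submodule.orthogonalProjectionOnto W (J X) : V)

/-- The normal part of `J X` with respect to the subspace `W`:
`N X := J X − T X` (also used for `n U := J U − t U` when `U ∈ Wᗮ`). -/
noncomputable def norm' {V : Type*} [NormedAddCommGroup V] [InnerProductSpace ℝ V]
    (W : Submodule ℝ V) [W.HasOrthogonalProjection] (J : V →ₗ[ℝ] V) (X : V) : V :=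
  J X - tang W J X

/-!
Write `T = P_W ∘ J` and `A_λ = T² - λ(pT + q)`. Symmetry of `J` and `J² = pJ + q` give
`⟪A_λ X, X⟫ = ‖TX‖² - λ‖JX‖²` on `W`, so a subspace of `W` is slant with `cos² θ = λ` exactly when
the quadratic form of the symmetric operator `A_λ` vanishes on it. For a semi-slant decomposition,
polarization and the `A_λ`-invariance of `D₁` give `A_λ D₂ = 0`, while on `D₁` the operator `A_λ`
acts as `(1 - λ) J²`, which is injective for `λ ≠ 1` as `q ≠ 0`; hence `W ∩ ker A_λ = D₂`.
Conversely, `A_λ` commutes with `T`, so `D = W ∩ ker A_λ` is `T`-invariant and `W ∩ Dᗮ` is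
`J`-invariant once `N` vanishes on it, while `D` is slant with `cos θ = √λ`.
-/

open Real

section Projection

variable {V : Type*} [NormedAddCommGroup V] [InnerProductSpace ℝ V]
  (W : Submodule ℝ V) [W.HasOrthogonalProjection] (J : V →ₗ[ℝ] V)

theorem tang_eq_starProjection (X : V) : tang W J X = W.starProjection (J X) := rfl

noncomputable def tangMap : V →ₗ[ℝ] V := W.starProjection.toLinearMap ∘ₗ J

theorem tangMap_apply (X : V) : tangMap W J X = tang W J X := rfl

theorem tang_mem (X : V) : tang W J X ∈ W := W.starProjection_apply_mem (J X)

theorem tang_eq_self_iff {X : V} : tang W J X = J X ↔ J X ∈ W :=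
  Submodule.starProjection_eq_self_iff

theorem norm'_eq_zero_iff {X : V} : norm' W J X = 0 ↔ J X ∈ W := by
  rw [norm', sub_eq_zero, eq_comm, tang_eq_self_iff]

theorem inner_tang_left_of_mem (X : V) {Y : V} (hY : Y ∈ W) : ⟪tang W J X, Y⟫ = ⟪J X, Y⟫ := by
  rw [tang_eq_starProjection, Submodule.inner_starProjection_left_eq_right,
    Submodule.starProjection_eq_self_iff.mpr hY]

variable {J}

theorem inner_tang_comm (hJ : J.IsSymmetric) {X Y : V} (hX : X ∈ W) (hY : Y ∈ W) :
    ⟪tang W J X, Y⟫ = ⟪X, tang W J Y⟫ := by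
  rw [inner_tang_left_of_mem W J X hY, hJ, real_inner_comm, ← inner_tang_left_of_mem W J Y hX,
    real_inner_comm]

end Projection

section Metallic

variable {V : Type*} [NormedAddCommGroup V] [InnerProductSpace ℝ V] {J : V →ₗ[ℝ] V} {p q : ℝ}

theorem injective_of_metallic (hq : q ≠ 0) (hJ2 : ∀ v, J (J v) = p • J v + q • v) :
    Function.Injective J := by
  refine (injective_iff_map_eq_zero J).2 fun x hx => ?_
  have : q • x = 0 := by simpa [hx] using (hJ2 x).symm
  exact (smul_eq_zero.1 this).resolve_left hq

theorem map_eq_self_of_metallic (hq : q ≠ 0) (hJ2 : ∀ v, J (J v) = p • J v + q • v)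
    {K : Submodule ℝ V} (hK : ∀ x ∈ K, J x ∈ K) : K.map J = K := by
  refine le_antisymm (Submodule.map_le_iff_le_comap.2 hK) fun x hx => ?_
  refine ⟨q⁻¹ • (J x - p • x), K.smul_mem _ (K.sub_mem (hK x hx) (K.smul_mem _ hx)), ?_⟩
  rw [map_smul, map_sub, map_smul, hJ2, add_sub_cancel_left, smul_smul, inv_mul_cancel₀ hq,
    one_smul]

end Metallic

section SlantOperator

variable {V : Type*} [NormedAddCommGroup V] [InnerProductSpace ℝ V]
  (W : Submodule ℝ V) [W.HasOrthogonalProjection] (J : V →ₗ[ℝ] V) (p q l : ℝ)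

noncomputable def slantOp : V →ₗ[ℝ] V :=
  tangMap W J ∘ₗ tangMap W J - l • (p • tangMap W J + q • LinearMap.id)

noncomputable def slantSpace : Submodule ℝ V :=
  W ⊓ LinearMap.ker (slantOp W J p q l)

theorem slantOp_apply (X : V) :
    slantOp W J p q l X = tang W J (tang W J X) - l • (p • tang W J X + q • X) := rfl

theorem mem_slantSpace {X : V} :
    X ∈ slantSpace W J p q l ↔
      X ∈ W ∧ tang W J (tang W J X) = l • (p • tang W J X + q • X) := by
  rw [slantSpace, Submodule.mem_inf, LinearMap.mem_ker, slantOp_apply, sub_eq_zero]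

theorem mem_orthogonal_slantSpace_iff {X : V} :
    X ∈ (slantSpace W J p q l)ᗮ ↔
      ∀ d ∈ W, tang W J (tang W J d) = l • (p • tang W J d + q • d) → ⟪X, d⟫ = 0 := by
  simp only [Submodule.mem_orthogonal', mem_slantSpace, and_imp]

theorem slantOp_mem {X : V} (hX : X ∈ W) : slantOp W J p q l X ∈ W :=
  W.sub_mem (tang_mem W J _) <|
    W.smul_mem _ (W.add_mem (W.smul_mem _ (tang_mem W J X)) (W.smul_mem _ hX))

theorem slantOp_tang (X : V) :
    slantOp W J p q l (tang W J X) = tang W J (slantOp W J p q l X) := by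
  simp only [← tangMap_apply, slantOp, LinearMap.sub_apply, LinearMap.comp_apply,
    LinearMap.smul_apply, LinearMap.add_apply, LinearMap.id_apply, map_sub, map_smul, map_add]

theorem tang_mem_slantSpace {X : V} (hX : X ∈ slantSpace W J p q l) :
    tang W J X ∈ slantSpace W J p q l := by
  obtain ⟨-, hX⟩ := Submodule.mem_inf.1 hX
  refine Submodule.mem_inf.2 ⟨tang_mem W J X, ?_⟩
  rw [LinearMap.mem_ker, slantOp_tang, LinearMap.mem_ker.1 hX, ← tangMap_apply, map_zero]

variable {W J p q l}

theorem slantOp_eq_of_apply_mem (hJ2 : ∀ v, J (J v) = p • J v + q • v) {X : V}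
    (hJX : J X ∈ W) (hJJX : J (J X) ∈ W) :
    slantOp W J p q l X = (1 - l) • J (J X) := by
  rw [slantOp_apply, (tang_eq_self_iff W J).2 hJX, (tang_eq_self_iff W J).2 hJJX, ← hJ2,
    sub_smul, one_smul]

theorem inner_slantOp_comm (hJ : J.IsSymmetric) {X Y : V} (hX : X ∈ W) (hY : Y ∈ W) :
    ⟪slantOp W J p q l X, Y⟫ = ⟪X, slantOp W J p q l Y⟫ := by
  have hT := inner_tang_comm W hJ hX hY
  have hTT : ⟪tang W J (tang W J X), Y⟫ = ⟪X, tang W J (tang W J Y)⟫ := by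
    rw [inner_tang_comm W hJ (tang_mem W J X) hY, inner_tang_comm W hJ hX (tang_mem W J Y)]
  simp only [slantOp_apply, inner_sub_left, inner_sub_right, inner_add_left, inner_add_right,
    real_inner_smul_left, real_inner_smul_right, hT, hTT]

theorem norm_apply_sq (hJ : J.IsSymmetric) (hJ2 : ∀ v, J (J v) = p • J v + q • v) {X : V}
    (hX : X ∈ W) : ‖J X‖ ^ 2 = p * ⟪tang W J X, X⟫ + q * ‖X‖ ^ 2 := by
  rw [← real_inner_self_eq_norm_sq, ← real_inner_self_eq_norm_sq, hJ, hJ2, inner_add_right,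
    real_inner_smul_right, real_inner_smul_right, inner_tang_left_of_mem W J X hX,
    real_inner_comm (J X) X]

theorem inner_slantOp_self (hJ : J.IsSymmetric) (hJ2 : ∀ v, J (J v) = p • J v + q • v) {X : V}
    (hX : X ∈ W) : ⟪slantOp W J p q l X, X⟫ = ‖tang W J X‖ ^ 2 - l * ‖J X‖ ^ 2 := by
  rw [norm_apply_sq hJ hJ2 hX, ← real_inner_self_eq_norm_sq (tang W J X),
    ← real_inner_self_eq_norm_sq X, ← inner_tang_comm W hJ (tang_mem W J X) hX]
  simp only [slantOp_apply, inner_sub_left, inner_add_left, real_inner_smul_left]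

end SlantOperator

section OrthogonalDecomposition

variable {V : Type*} [NormedAddCommGroup V] [InnerProductSpace ℝ V] {D₁ D₂ : Submodule ℝ V}

theorem mem_left_of_mem_sup_of_inner_eq_zero (horth : ∀ x ∈ D₁, ∀ y ∈ D₂, ⟪x, y⟫ = 0)
    {X : V} (hX : X ∈ D₁ ⊔ D₂) (hX₂ : ∀ y ∈ D₂, ⟪X, y⟫ = 0) : X ∈ D₁ := by
  obtain ⟨x₁, hx₁, x₂, hx₂, rfl⟩ := Submodule.mem_sup.1 hX
  have : ⟪x₂, x₂⟫ = 0 := by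
    simpa only [inner_add_left, horth x₁ hx₁ x₂ hx₂, zero_add] using hX₂ x₂ hx₂
  rwa [inner_self_eq_zero.1 this, add_zero]

theorem apply_eq_zero_of_inner_apply_self_eq_zero {A : V →ₗ[ℝ] V}
    (hA : ∀ x ∈ D₁ ⊔ D₂, ∀ y ∈ D₁ ⊔ D₂, ⟪A x, y⟫ = ⟪x, A y⟫)
    (hD₁ : ∀ x ∈ D₁, A x ∈ D₁) (hD₂ : ∀ x ∈ D₂, A x ∈ D₁ ⊔ D₂)
    (horth : ∀ x ∈ D₁, ∀ y ∈ D₂, ⟪x, y⟫ = 0) (hquad : ∀ x ∈ D₂, ⟪A x, x⟫ = 0)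
    {x : V} (hx : x ∈ D₂) : A x = 0 := by
  have hx' : x ∈ D₁ ⊔ D₂ := Submodule.mem_sup_right hx
  have h₁ : ∀ y ∈ D₁, ⟪A x, y⟫ = 0 := fun y hy => by
    rw [hA x hx' y (Submodule.mem_sup_left hy), real_inner_comm]
    exact horth _ (hD₁ y hy) x hx
  have h₂ : ∀ y ∈ D₂, ⟪A x, y⟫ = 0 := fun y hy => by
    have hxy := hquad (x + y) (D₂.add_mem hx hy)
    rw [map_add, inner_add_left, inner_add_right, inner_add_right, hquad x hx, hquad y hy,
      hA y (Submodule.mem_sup_right hy) x hx', real_inner_comm (A x) y] at hxy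
    linarith
  obtain ⟨y₁, hy₁, y₂, hy₂, hy⟩ := Submodule.mem_sup.1 (hD₂ x hx)
  rw [← inner_self_eq_zero (𝕜 := ℝ)]
  nth_rw 2 [← hy]
  rw [inner_add_right, h₁ y₁ hy₁, h₂ y₂ hy₂, add_zero]

end OrthogonalDecomposition

theorem cos_sq_lt_one_of_mem_Ioc {θ : ℝ} (hθ : θ ∈ Set.Ioc 0 (π / 2)) : cos θ ^ 2 < 1 := by
  have h0 : 0 ≤ cos θ := cos_nonneg_of_mem_Icc ⟨by linarith [pi_pos, hθ.1], hθ.2⟩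
  have h1 : cos θ < 1 := by
    simpa using cos_lt_cos_of_nonneg_of_le_pi le_rfl (by linarith [pi_pos, hθ.2]) hθ.1
  nlinarith

section SemiSlant

variable {V : Type*} [NormedAddCommGroup V] [InnerProductSpace ℝ V]

def IsSemiSlant (W : Submodule ℝ V) [W.HasOrthogonalProjection] (J : V →ₗ[ℝ] V)
    (D₁ D₂ : Submodule ℝ V) (θ : ℝ) : Prop :=
  D₁ ≤ W ∧ D₂ ≤ W ∧ (∀ x ∈ D₁, ∀ y ∈ D₂, ⟪x, y⟫ = 0) ∧ D₁ ⊔ D₂ = W ∧ D₁.map J = D₁ ∧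
    θ ∈ Set.Ioc 0 (π / 2) ∧ ∀ X ∈ D₂, ‖tang W J X‖ = cos θ * ‖J X‖

variable {W : Submodule ℝ V} [W.HasOrthogonalProjection] {J : V →ₗ[ℝ] V} {p q l θ : ℝ}
  {D₁ D₂ : Submodule ℝ V}

theorem slantSpace_eq_of_orthogonal_sup (hJ : J.IsSymmetric)
    (hJ2 : ∀ v, J (J v) = p • J v + q • v) (hq : q ≠ 0) (hl : l ≠ 1) (hD₂W : D₂ ≤ W)
    (horth : ∀ x ∈ D₁, ∀ y ∈ D₂, ⟪x, y⟫ = 0) (hsup : D₁ ⊔ D₂ = W)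
    (hD₁ : ∀ x ∈ D₁, J x ∈ D₁) (hslant : ∀ X ∈ D₂, ‖tang W J X‖ ^ 2 = l * ‖J X‖ ^ 2) :
    slantSpace W J p q l = D₂ := by
  have hD₁W : D₁ ≤ W := hsup ▸ le_sup_left
  have hA₁ : ∀ x ∈ D₁, slantOp W J p q l x = (1 - l) • J (J x) := fun x hx =>
    slantOp_eq_of_apply_mem hJ2 (hD₁W (hD₁ x hx)) (hD₁W (hD₁ _ (hD₁ x hx)))
  have hA₂ : ∀ x ∈ D₂, slantOp W J p q l x = 0 := by
    subst hsup
    refine fun x hx => apply_eq_zero_of_inner_apply_self_eq_zero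
      (fun x hx y hy => inner_slantOp_comm hJ hx hy) (fun x hx => ?_)
      (fun x hx => slantOp_mem _ _ _ _ _ (hD₂W hx)) horth (fun x hx => ?_) hx
    · rw [hA₁ x hx]
      exact D₁.smul_mem _ (hD₁ _ (hD₁ x hx))
    · rw [inner_slantOp_self hJ hJ2 (hD₂W hx), hslant x hx, sub_self]
  refine le_antisymm (fun X hX => ?_) fun x hx => Submodule.mem_inf.2 ⟨hD₂W hx, hA₂ x hx⟩
  obtain ⟨hXW, hAX⟩ := Submodule.mem_inf.1 hX
  obtain ⟨x₁, hx₁, x₂, hx₂, rfl⟩ := Submodule.mem_sup.1 (hsup ▸ hXW)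
  have hJJx₁ : (1 - l) • J (J x₁) = 0 := by
    rwa [LinearMap.mem_ker, map_add, hA₂ x₂ hx₂, add_zero, hA₁ x₁ hx₁] at hAX
  have hJ0 := (injective_iff_map_eq_zero J).1 (injective_of_metallic hq hJ2)
  rw [hJ0 _ (hJ0 _ ((smul_eq_zero.1 hJJx₁).resolve_left (sub_ne_zero.2 hl.symm))), zero_add]
  exact hx₂

theorem IsSemiSlant.cos_sq_mem_Ico (h : IsSemiSlant W J D₁ D₂ θ) : cos θ ^ 2 ∈ Set.Ico 0 1 := by
  obtain ⟨-, -, -, -, -, hθ, -⟩ := h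
  exact ⟨sq_nonneg _, cos_sq_lt_one_of_mem_Ioc hθ⟩

theorem IsSemiSlant.slantSpace_eq (h : IsSemiSlant W J D₁ D₂ θ) (hJ : J.IsSymmetric)
    (hJ2 : ∀ v, J (J v) = p • J v + q • v) (hq : q ≠ 0) :
    slantSpace W J p q (cos θ ^ 2) = D₂ := by
  have hl := h.cos_sq_mem_Ico.2.ne
  obtain ⟨-, hD₂W, horth, hsup, hmap, -, hslant⟩ := h
  refine slantSpace_eq_of_orthogonal_sup hJ hJ2 hq hl hD₂W horth
    hsup (fun x hx => hmap ▸ Submodule.mem_map_of_mem hx) fun X hX => ?_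
  rw [hslant X hX, mul_pow]

theorem IsSemiSlant.norm'_eq_zero (h : IsSemiSlant W J D₁ D₂ θ) (hJ : J.IsSymmetric)
    (hJ2 : ∀ v, J (J v) = p • J v + q • v) (hq : q ≠ 0) {X : V} (hX : X ∈ W)
    (hXD : X ∈ (slantSpace W J p q (cos θ ^ 2))ᗮ) : norm' W J X = 0 := by
  rw [h.slantSpace_eq hJ hJ2 hq, Submodule.mem_orthogonal'] at hXD
  obtain ⟨hD₁W, -, horth, hsup, hmap, -⟩ := h
  have hX₁ : X ∈ D₁ := mem_left_of_mem_sup_of_inner_eq_zero horth (hsup ▸ hX) hXD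
  exact (norm'_eq_zero_iff W J).2 (hD₁W (hmap ▸ Submodule.mem_map_of_mem hX₁))

theorem isSemiSlant_of_norm'_eq_zero [FiniteDimensional ℝ W] (hJ : J.IsSymmetric)
    (hJ2 : ∀ v, J (J v) = p • J v + q • v) (hq : q ≠ 0) (hl : l ∈ Set.Ico 0 1)
    (H : ∀ X ∈ W, X ∈ (slantSpace W J p q l)ᗮ → norm' W J X = 0) :
    IsSemiSlant W J ((slantSpace W J p q l)ᗮ ⊓ W) (slantSpace W J p q l) (arccos √l) := by
  set D := slantSpace W J p q l
  have hDW : D ≤ W := inf_le_left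
  have : FiniteDimensional ℝ D := Submodule.finiteDimensional_of_le hDW
  have hJD₁ : ∀ x ∈ Dᗮ ⊓ W, J x ∈ Dᗮ ⊓ W := by
    rintro x ⟨hxD, hxW⟩
    refine ⟨fun y hy => ?_, (norm'_eq_zero_iff W J).1 (H x hxW hxD)⟩
    rw [← hJ, ← inner_tang_left_of_mem W J y hxW]
    exact hxD _ (tang_mem_slantSpace W J p q l hy)
  have hθ : arccos √l ∈ Set.Ioc 0 (π / 2) :=
    ⟨arccos_pos.2 ((sqrt_lt' one_pos).2 (by linarith [hl.2])),
      arccos_le_pi_div_two.2 (sqrt_nonneg l)⟩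
  have hcos : cos (arccos √l) = √l :=
    cos_arccos (by linarith [sqrt_nonneg l]) (sqrt_le_one.2 hl.2.le)
  refine ⟨inf_le_right, hDW, fun x hx y hy => ?_, ?_, map_eq_self_of_metallic hq hJ2 hJD₁, hθ,
    fun X hX => ?_⟩
  · rw [real_inner_comm]
    exact hx.1 y hy
  · rw [sup_comm]
    exact Submodule.sup_orthogonal_inf_of_hasOrthogonalProjection hDW
  · have hquad := inner_slantOp_self (l := l) hJ hJ2 (hDW hX)
    rw [LinearMap.mem_ker.1 (Submodule.mem_inf.1 hX).2, inner_zero_left, eq_comm, sub_eq_zero]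
      at hquad
    rw [hcos, ← sqrt_sq (norm_nonneg (tang W J X)), hquad, sqrt_mul hl.1, sqrt_sq (norm_nonneg _)]

end SemiSlant

theorem semislant_characterization_general {V : Type*} [NormedAddCommGroup V]
    [InnerProductSpace ℝ V]
    (W : Submodule ℝ V) [FiniteDimensional ℝ W]
    (p q : ℕ) (hq : 0 < q)
    (J : V →ₗ[ℝ] V)
    (hJsym : ∀ x y : V, ⟪J x, y⟫ = ⟪x, J y⟫)
    (hJ2 : ∀ v : V, J (J v) = (p : ℝ) • J v + (q : ℝ) • v) :
    ((∃ D₁ D₂ : Submodule ℝ V, ∃ θ : ℝ,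
        D₁ ≤ W ∧ D₂ ≤ W ∧ (∀ x ∈ D₁, ∀ y ∈ D₂, ⟪x, y⟫ = 0) ∧ D₁ ⊔ D₂ = W ∧
        D₁.map J = D₁ ∧ θ ∈ Set.Ioc 0 (Real.pi / 2) ∧
        (∀ X ∈ D₂, ‖tang W J X‖ = Real.cos θ * ‖J X‖)) ↔
      (∃ l ∈ Set.Ico (0 : ℝ) 1,
        ∀ X ∈ W,
          (∀ d : V, d ∈ W →
            tang W J (tang W J d) = l • ((p : ℝ) • tang W J d + (q : ℝ) • d) →
            ⟪X, d⟫ = 0) →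
          norm' W J X = 0)) ∧
    (∀ D₁ D₂ : Submodule ℝ V, ∀ θ : ℝ,
      D₁ ≤ W → D₂ ≤ W → (∀ x ∈ D₁, ∀ y ∈ D₂, ⟪x, y⟫ = 0) → D₁ ⊔ D₂ = W →
      D₁.map J = D₁ → θ ∈ Set.Ioc 0 (Real.pi / 2) →
      (∀ X ∈ D₂, ‖tang W J X‖ = Real.cos θ * ‖J X‖) →
      {X : V | X ∈ W ∧ tang W J (tang W J X) =
          Real.cos θ ^ 2 • ((p : ℝ) • tang W J X + (q : ℝ) • X)} = (D₂ : Set V)) := by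
  have hq' : (q : ℝ) ≠ 0 := by positivity
  simp only [← mem_orthogonal_slantSpace_iff, ← IsSemiSlant.eq_1]
  refine ⟨⟨fun ⟨D₁, D₂, θ, h⟩ => ⟨cos θ ^ 2, h.cos_sq_mem_Ico,
    fun X hX hXD => h.norm'_eq_zero hJsym hJ2 hq' hX hXD⟩,
    fun ⟨l, hl, H⟩ => ⟨_, _, _, isSemiSlant_of_norm'_eq_zero hJsym hJ2 hq' hl H⟩⟩, ?_⟩
  intro D₁ D₂ θ hD₁W hD₂W horth hsup hmap hθ hslant
  rw [← IsSemiSlant.slantSpace_eq ⟨hD₁W, hD₂W, horth, hsup, hmap, hθ, hslant⟩ hJsym hJ2 hq']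
  ext X
  exact (mem_slantSpace W J _ _ _).symm

/-- For a symmetric metallic structure `J` and a finite-dimensional subspace
`W`, `W` is a semi-slant subspace (i.e. `W = D₁ ⊕ D₂` with `D₁ ⊥ D₂`, `J(D₁) = D₁` and
`D₂` slant with angle `θ ≠ 0`) iff there is `λ ∈ [0, 1)` such that `NX = 0` for every
`X ∈ W` orthogonal to `D := {X ∈ W : T²X = λ(pTX + qX)}`; moreover, in that case
`D = D₂` and `λ = cos²θ`. -/
theorem semislant_characterization {V : Type*} [NormedAddCommGroup V]
    [InnerProductSpace ℝ V]
    (W : Submodule ℝ V) [FiniteDimensional ℝ W]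
    (p q : ℕ) (hp : 0 < p) (hq : 0 < q)
    (J : V →ₗ[ℝ] V)
    (hJsym : ∀ x y : V, ⟪J x, y⟫ = ⟪x, J y⟫)
    (hJ2 : ∀ v : V, J (J v) = (p : ℝ) • J v + (q : ℝ) • v) :
    ((∃ D₁ D₂ : Submodule ℝ V, ∃ θ : ℝ,
        D₁ ≤ W ∧ D₂ ≤ W ∧ (∀ x ∈ D₁, ∀ y ∈ D₂, ⟪x, y⟫ = 0) ∧ D₁ ⊔ D₂ = W ∧
        D₁.map J = D₁ ∧ θ ∈ Set.Ioc 0 (Real.pi / 2) ∧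
        (∀ X ∈ D₂, ‖tang W J X‖ = Real.cos θ * ‖J X‖)) ↔
      (∃ l ∈ Set.Ico (0 : ℝ) 1,
        ∀ X ∈ W,
          (∀ d : V, d ∈ W →
            tang W J (tang W J d) = l • ((p : ℝ) • tang W J d + (q : ℝ) • d) →
            ⟪X, d⟫ = 0) →
          norm' W J X = 0)) ∧
    (∀ D₁ D₂ : Submodule ℝ V, ∀ θ : ℝ,
      D₁ ≤ W → D₂ ≤ W → (∀ x ∈ D₁, ∀ y ∈ D₂, ⟪x, y⟫ = 0) → D₁ ⊔ D₂ = W →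
      D₁.map J = D₁ → θ ∈ Set.Ioc 0 (Real.pi / 2) →
      (∀ X ∈ D₂, ‖tang W J X‖ = Real.cos θ * ‖J X‖) →
      {X : V | X ∈ W ∧ tang W J (tang W J X) =
          Real.cos θ ^ 2 • ((p : ℝ) • tang W J X + (q : ℝ) • X)} = (D₂ : Set V)) :=
  semislant_characterization_general W p q hq J hJsym hJ2
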